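/- arXiv:1407.6176 — 9 statements merged into one kernel-verified Lean document; each statement's English description precedes it below -/
import Mathlib

section
/- Let ζ, z : ℕ → ℝ be sequences such that z(n) = Σ_{l=0}^{n} (n!/(n−l)!) · ζ(l) for all n ∈ ℕ. Then for every integer m ≥ 1 and every n ∈ ℕ, Σ_{k : k+m ≤ n} (n!/(n−k−m)!) · ζ(k) = Σ_{k=m}^{n} Σ_{j=0}^{k−m} (−1)^{k−j−m} · (n! / (j! · (k−m−j)! · (n−k)!)) · z(j). -/
open Finset
open scoped Nat

/-!
Since `n!/(n-l)! = l! * C(n, l)`, the hypothesis says that `z` is the binomial transform of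
`l ↦ l! ζ(l)`. Binomial inversion (the `s`-th forward difference at `0` of `k ↦ C(k, l)` is
`δ_{s,l}`) then gives `∑_j (-1)^(s-j) C(s, j) z(j) = s! ζ(s)`, so the inner sum of the right-hand
side at `k` is `n!/(n-k)! * ζ(k-m)`, and the substitution `k ↦ k + m` turns the outer sum into
the left-hand side.
-/

theorem sum_neg_one_pow_mul_choose_mul_choose (s l : ℕ) :
    ∑ k ∈ range (s + 1), (-1 : ℤ) ^ (s - k) * s.choose k * k.choose l =
      if s = l then 1 else 0 := by
  simpa [fwdDiff_iter_eq_sum_shift] using fwdDiff_iter_choose_zero l s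

theorem sum_neg_one_pow_choose_smul_eq_of_eq_sum_choose_smul {G : Type*} [AddCommGroup G]
    {a f : ℕ → G} (hf : ∀ n, f n = ∑ l ∈ range (n + 1), n.choose l • a l) (s : ℕ) :
    ∑ k ∈ range (s + 1), ((-1 : ℤ) ^ (s - k) * s.choose k) • f k = a s := by
  have hf' : ∀ k ∈ range (s + 1), f k = ∑ l ∈ range (s + 1), (k.choose l : ℤ) • a l := by
    intro k hk
    rw [hf, ← sum_subset (range_subset_range.2 (mem_range.1 hk))]
    · simp only [natCast_zsmul]
    · intro l _ hl
      rw [Nat.choose_eq_zero_of_lt (by simpa using hl), Nat.cast_zero, zero_smul]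
  calc ∑ k ∈ range (s + 1), ((-1 : ℤ) ^ (s - k) * s.choose k) • f k
      = ∑ l ∈ range (s + 1),
          (∑ k ∈ range (s + 1), (-1 : ℤ) ^ (s - k) * s.choose k * k.choose l) • a l := by
        simp only [sum_smul, mul_smul]
        rw [sum_comm]
        refine sum_congr rfl fun k hk => ?_
        rw [hf' k hk, smul_sum, smul_sum]
    _ = a s := by simp [sum_neg_one_pow_mul_choose_mul_choose]

section LowerFactorialInterpolation

variable {ζ z : ℕ → ℝ}

theorem sum_neg_one_pow_mul_choose_mul_eq_factorial_mul
    (hz : ∀ n, z n = ∑ l ∈ range (n + 1), (n.descFactorial l : ℝ) * ζ l) (s : ℕ) :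
    ∑ j ∈ range (s + 1), (-1 : ℝ) ^ (s - j) * s.choose j * z j = s ! * ζ s := by
  have hz' : ∀ n, z n = ∑ l ∈ range (n + 1), n.choose l • ((l ! : ℝ) * ζ l) := fun n => by
    simp only [hz, Nat.descFactorial_eq_factorial_mul_choose, nsmul_eq_mul]; push_cast
    exact sum_congr rfl fun _ _ => by ring
  simpa [zsmul_eq_mul] using sum_neg_one_pow_choose_smul_eq_of_eq_sum_choose_smul hz' s

theorem sum_neg_one_pow_mul_factorial_div_mul_eq
    (hz : ∀ n, z n = ∑ l ∈ range (n + 1), (n.descFactorial l : ℝ) * ζ l) {n k : ℕ} (hk : k ≤ n)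
    (s : ℕ) :
    ∑ j ∈ range (s + 1), (-1 : ℝ) ^ (s - j) * (n ! / (j ! * (s - j)! * (n - k)!)) * z j =
      n.descFactorial k * ζ s := by
  have hn : ((n - k)! : ℝ) * n.descFactorial k = n ! := by
    exact_mod_cast Nat.factorial_mul_descFactorial hk
  calc ∑ j ∈ range (s + 1), (-1 : ℝ) ^ (s - j) * (n ! / (j ! * (s - j)! * (n - k)!)) * z j
      = n.descFactorial k / s ! * ∑ j ∈ range (s + 1), (-1 : ℝ) ^ (s - j) * s.choose j * z j := by
        rw [mul_sum]
        refine sum_congr rfl fun j hj => ?_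
        rw [Nat.cast_choose ℝ (Nat.lt_succ_iff.1 (mem_range.1 hj)), ← hn]
        field_simp
    _ = n.descFactorial k * ζ s := by
        rw [sum_neg_one_pow_mul_choose_mul_eq_factorial_mul hz]
        field_simp

end LowerFactorialInterpolation

theorem lattice_multiplication_by_t_pow (ζ z : ℕ → ℝ)
    (hz : ∀ n : ℕ, z n = ∑ l ∈ Finset.range (n + 1), (Nat.descFactorial n l : ℝ) * ζ l) :
    ∀ m : ℕ, 1 ≤ m → ∀ n : ℕ,
      ∑ k ∈ (Finset.range (n + 1)).filter (fun k => k + m ≤ n),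
        (Nat.descFactorial n (k + m) : ℝ) * ζ k
      = ∑ k ∈ Finset.Icc m n, ∑ j ∈ Finset.range (k - m + 1),
          (-1 : ℝ) ^ (k - j - m) *
            ((Nat.factorial n : ℝ) /
              ((Nat.factorial j : ℝ) * (Nat.factorial (k - m - j) : ℝ) *
                (Nat.factorial (n - k) : ℝ))) * z j := by
  intro m _ n
  have inner : ∀ k ∈ Icc m n, ∑ j ∈ range (k - m + 1),
      (-1 : ℝ) ^ (k - j - m) * ((n ! : ℝ) / (j ! * (k - m - j)! * (n - k)!)) * z j =
        n.descFactorial k * ζ (k - m) := fun k hk => by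
    simpa only [Nat.sub_right_comm k] using
      sum_neg_one_pow_mul_factorial_div_mul_eq hz (mem_Icc.1 hk).2 (k - m)
  rw [sum_congr rfl inner]
  refine sum_nbij' (· + m) (· - m) ?_ ?_ ?_ ?_ ?_ <;> intro k hk <;>
    simp only [mem_filter, mem_range, mem_Icc, Nat.add_sub_cancel] at hk ⊢ <;> omega
end

section
/- Let N ∈ ℕ, let α_{l,m} ∈ ℝ for l = 0,…,N and m = 0,…,M_l, and let γ_r ∈ ℝ for r = 0,…,R. Let b : ℕ → ℝ be a sequence such that the formal power series z(t) = Σ_{k≥0} b_k t^k satisfies a_N(t) z^{(N)}(t) + … + a_1(t) z'(t) + a_0(t) z(t) + c_0(t) = 0, where a_l(t) = Σ_{m=0}^{M_l} α_{l,m} t^m and c_0(t) = Σ_{r=0}^{R} γ_r t^r; equivalently, for every k ∈ ℕ: Σ_{l=0}^{N} Σ_{m=0}^{min(M_l,k)} α_{l,m} · ((k−m+l)!/(k−m)!) · b_{k−m+l} + γ_k = 0 (with γ_k := 0 for k > R). Define z : ℕ → ℝ by z(n) = Σ_{k=0}^{n} b_k · n!/(n−k)!. Then for every n ∈ ℕ: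 Σ_{l=0}^{N} [ α_{l,0} · (Δ^l z)(n) + Σ_{m=1}^{M_l} α_{l,m} · Σ_{k=m}^{n} Σ_{j=0}^{k−m} (−1)^{k−j−m} · (n!/(j!·(k−m−j)!·(n−k)!)) · (Δ^l z)(j) ] + Σ_{r=0}^{min(R,n)} γ_r · n!/(n−r)! = 0. -/
/-!
A lattice function of the form `u n = ∑ₖ cₖ n!/(n-k)!` is the image of the power series
`∑ₖ cₖ tᵏ`. On such functions the forward difference acts on coefficients as `d/dt` does,
`cₖ ↦ (k+1) cₖ₊₁`, so `Δᵖ u 0 = p! cₚ`; expanding `Δᵖ u 0` as an alternating binomial sum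
then shows that the nonlocal operator attached to `αₗₘ` (`m ≥ 1`) acts on coefficients as
multiplication by `tᵐ`, i.e. `cₖ ↦ cₖ₋ₘ`. Hence the left-hand side of the lattice equation is
the lattice image of the series whose `k`-th coefficient is the `k`-th coefficient of the ODE
residual, which vanishes.
-/

def fwdDiffSeq (u : ℕ → ℝ) : ℕ → ℝ := fun n => u (n + 1) - u n

open Finset fwdDiff
open scoped Nat

theorem Nat.succ_descFactorial_succ_eq_add (n k : ℕ) :
    (n + 1).descFactorial (k + 1) = n.descFactorial (k + 1) + (k + 1) * n.descFactorial k := by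
  simp only [Nat.descFactorial_eq_factorial_mul_choose, Nat.choose_succ_succ', Nat.factorial_succ]
  ring

theorem sum_range_succ_eq_add_sum_Icc {M : Type*} [AddCommMonoid M] (f : ℕ → M) (L : ℕ) :
    ∑ m ∈ range (L + 1), f m = f 0 + ∑ m ∈ Icc 1 L, f m := by
  rw [range_eq_Ico, sum_eq_sum_Ico_succ_bot (by omega : 0 < L + 1), zero_add,
    Ico_add_one_right_eq_Icc]

section CommRing

variable {R : Type*} [CommRing R]

noncomputable def descSeries (c : ℕ → R) (n : ℕ) : R :=
  ∑ k ∈ range (n + 1), c k * n.descFactorial k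

theorem descSeries_eq_add_sum (c : ℕ → R) (n : ℕ) :
    descSeries c n = c 0 + ∑ k ∈ range (n + 1), c (k + 1) * n.descFactorial (k + 1) := by
  rw [descSeries, sum_range_succ' _ n, sum_range_succ _ n, Nat.descFactorial_of_lt n.lt_succ_self]
  simp [add_comm]

theorem fwdDiff_descSeries (c : ℕ → R) :
    Δ_[1] (descSeries c) = descSeries fun j => (j + 1) * c (j + 1) := by
  ext n
  have hterm (k : ℕ) : c (k + 1) * ((n + 1).descFactorial (k + 1) : R) =
      c (k + 1) * n.descFactorial (k + 1) + (k + 1) * c (k + 1) * n.descFactorial k := by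
    rw [Nat.succ_descFactorial_succ_eq_add]
    push_cast
    ring
  rw [fwdDiff, descSeries_eq_add_sum c n, descSeries, descSeries, sum_range_succ' _ (n + 1)]
  simp only [hterm, sum_add_distrib, Nat.descFactorial_zero, Nat.cast_one, mul_one]
  abel

theorem fwdDiff_iter_descSeries (c : ℕ → R) (l : ℕ) :
    (Δ_[1])^[l] (descSeries c) = descSeries fun j => (j + l).descFactorial l * c (j + l) := by
  induction l generalizing c with
  | zero => simp
  | succ l ih =>
    rw [Function.iterate_succ_apply, fwdDiff_descSeries, ih]
    congr! 2 with j
    rw [← add_assoc, Nat.succ_descFactorial_succ]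
    push_cast
    ring

theorem sum_alternating_choose_descSeries (c : ℕ → R) (p : ℕ) :
    ∑ j ∈ range (p + 1), (-1) ^ (p - j) * p.choose j * descSeries c j = p ! * c p := by
  have h := congr_fun (fwdDiff_iter_descSeries c p) 0
  rw [fwdDiff_iter_eq_sum_shift] at h
  simpa [descSeries, Nat.descFactorial_self, zsmul_eq_mul] using h

theorem descSeries_sum_add {ι : Type*} (s : Finset ι) (d : ι → ℕ → R) (g : ℕ → R) (n : ℕ) :
    ∑ i ∈ s, descSeries (d i) n + descSeries g n = descSeries (fun k => ∑ i ∈ s, d i k + g k) n := by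
  simp only [descSeries, add_mul, sum_mul, sum_add_distrib]
  rw [sum_comm]

theorem sum_range_min_eq_descSeries (γ : ℕ → R) (L n : ℕ) :
    ∑ r ∈ range (min L n + 1), γ r * n.descFactorial r =
      descSeries (fun k => if k ≤ L then γ k else 0) n := by
  simp only [descSeries, ite_mul, zero_mul]
  rw [← sum_filter]
  congr 1
  ext k
  simp only [mem_range, mem_filter]
  omega

end CommRing

section Field

variable {K : Type*} [Field K] [CharZero K]

theorem factorial_div_eq_descFactorial_div_mul_choose {n k p j : ℕ} (hk : k ≤ n) (hj : j ≤ p) :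
    (n ! : K) / (j ! * (p - j)! * (n - k)!) = n.descFactorial k / p ! * p.choose j := by
  rw [Nat.cast_choose K hj, ← Nat.factorial_mul_descFactorial hk]
  push_cast
  rw [div_mul_div_comm, div_eq_div_iff (by simp [Nat.factorial_ne_zero])
    (by simp [Nat.factorial_ne_zero])]
  ring

-- The paper's nonlocal lattice operator standing for multiplication by `tᵐ`.
noncomputable def latticeMulPow (m : ℕ) (u : ℕ → K) (n : ℕ) : K :=
  ∑ k ∈ Icc m n, ∑ j ∈ range (k - m + 1),
    (-1) ^ (k - j - m) * ((n ! : K) / (j ! * (k - m - j)! * (n - k)!)) * u j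

theorem sum_alternating_factorial_div_descSeries (c : ℕ → K) {m k n : ℕ} (hk : k ≤ n) :
    ∑ j ∈ range (k - m + 1), (-1) ^ (k - j - m) * ((n ! : K) / (j ! * (k - m - j)! * (n - k)!)) *
      descSeries c j = n.descFactorial k * c (k - m) := by
  calc _ = n.descFactorial k / (k - m)! *
        ∑ j ∈ range (k - m + 1), (-1) ^ (k - m - j) * (k - m).choose j * descSeries c j := by
        rw [mul_sum]
        refine sum_congr rfl fun j hj => ?_
        rw [Nat.sub_right_comm k j m, factorial_div_eq_descFactorial_div_mul_choose hk
          (mem_range_succ_iff.mp hj)]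
        ring
    _ = n.descFactorial k * c (k - m) := by
        have : ((k - m)! : K) ≠ 0 := by simp [Nat.factorial_ne_zero]
        rw [sum_alternating_choose_descSeries, ← mul_assoc, div_mul_cancel₀ _ this]

theorem latticeMulPow_descSeries (m : ℕ) (c : ℕ → K) :
    latticeMulPow m (descSeries c) = descSeries fun k => if m ≤ k then c (k - m) else 0 := by
  ext n
  rw [latticeMulPow, descSeries]
  simp only [ite_mul, zero_mul]
  rw [← sum_filter, show (range (n + 1)).filter (m ≤ ·) = Icc m n by ext; simp; omega]
  refine sum_congr rfl fun k hk => ?_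
  rw [mem_Icc] at hk
  rw [sum_alternating_factorial_div_descSeries c hk.2, mul_comm]

theorem add_sum_latticeMulPow_descSeries (A c : ℕ → K) (L n : ℕ) :
    A 0 * descSeries c n + ∑ m ∈ Icc 1 L, A m * latticeMulPow m (descSeries c) n =
      descSeries (fun k => ∑ m ∈ range (min L k + 1), A m * c (k - m)) n := by
  have h0 : A 0 * descSeries c n = A 0 * latticeMulPow 0 (descSeries c) n := by
    simp [latticeMulPow_descSeries]
  rw [h0, ← sum_range_succ_eq_add_sum_Icc fun m => A m * latticeMulPow m (descSeries c) n]
  simp only [latticeMulPow_descSeries, descSeries, mul_sum, ← mul_assoc, mul_ite, mul_zero, ite_mul,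
    zero_mul]
  rw [sum_comm]
  refine sum_congr rfl fun k _ => ?_
  rw [sum_mul, ← sum_filter]
  congr 1
  ext m
  simp only [mem_range, mem_filter]
  omega

end Field

/-- Discretization of a linear ODE with polynomial coefficients: the Taylor
coefficients of a formal power series solution yield an exact solution of the
associated nonlocal difference equation on the integer lattice. -/
theorem linear_ode_discretization
    (N R : ℕ) (M : ℕ → ℕ) (α : ℕ → ℕ → ℝ) (γ : ℕ → ℝ) (b : ℕ → ℝ)
    (hode : ∀ k : ℕ,
      (∑ l ∈ Finset.range (N + 1), ∑ m ∈ Finset.range (min (M l) k + 1),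
        α l m * (Nat.descFactorial (k - m + l) l : ℝ) * b (k - m + l))
      + (if k ≤ R then γ k else 0) = 0)
    (z : ℕ → ℝ)
    (hz : ∀ n : ℕ, z n = ∑ k ∈ Finset.range (n + 1), b k * (Nat.descFactorial n k : ℝ)) :
    ∀ n : ℕ,
      (∑ l ∈ Finset.range (N + 1),
        (α l 0 * (fwdDiffSeq^[l] z) n
          + ∑ m ∈ Finset.Icc 1 (M l), α l m *
              ∑ k ∈ Finset.Icc m n, ∑ j ∈ Finset.range (k - m + 1),
                (-1 : ℝ) ^ (k - j - m) *
                  ((Nat.factorial n : ℝ) /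
                    ((Nat.factorial j : ℝ) * (Nat.factorial (k - m - j) : ℝ) *
                      (Nat.factorial (n - k) : ℝ))) * (fwdDiffSeq^[l] z) j))
      + ∑ r ∈ Finset.range (min R n + 1), γ r * (Nat.descFactorial n r : ℝ) = 0 := by
  intro n
  have hΔ (l : ℕ) : fwdDiffSeq^[l] z = descSeries fun j => (j + l).descFactorial l * b (j + l) := by
    rw [show z = descSeries b from funext hz, ← fwdDiff_iter_descSeries]
    rfl
  simp only [← latticeMulPow.eq_1, hΔ, add_sum_latticeMulPow_descSeries, sum_range_min_eq_descSeries,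
    descSeries_sum_add]
  have hres : (fun k => (∑ l ∈ range (N + 1), ∑ m ∈ range (min (M l) k + 1),
      α l m * ((k - m + l).descFactorial l * b (k - m + l))) + if k ≤ R then γ k else 0) = 0 :=
    funext fun k => by simpa only [mul_assoc, Pi.zero_apply] using hode k
  rw [hres]
  simp [descSeries]
end

section
/- Let m ∈ ℕ, N ≥ 1, and let α_{j,s} ∈ ℝ for j = 0,…,N and s = 0,…,M_j. Let b : ℕ → ℝ be a sequence such that the formal power series z(t) = Σ_{k≥0} b_k t^k satisfies z^{(m)}(t) = Σ_{j=1}^{N} a_j(t) · z(t)^j + a_0(t), where a_j(t) = Σ_{s=0}^{M_j} α_{j,s} t^s; equivalently, for every k ∈ ℕ: ((k+m)!/k!) · b_{k+m} = Σ_{j=1}^{N} Σ_{s=0}^{min(M_j,k)} α_{j,s} · Σ_{i_1+…+i_j = k−s} b_{i_1}⋯b_{i_j} + α_{0,k} (with α_{0,k} := 0 for k > M_0). Define z : ℕ → ℝ by z(n) = Σ_{k=0}^{n} b_k · n!/(n−k)!. Then for every n ∈ ℕ: (Δ^m z)(n) = n! · Σ_{j=1}^{N} Σ_{s=0}^{min(M_j,n)}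 α_{j,s} · Σ_{(k_1,…,k_j) ∈ ℕ^j, k_1+…+k_j ≤ n−s} ( (−1)^{k_1+…+k_j+(n−s)} / (k_1!⋯k_j!) ) · ( (j−1)^{(n−s)−(k_1+…+k_j)} / ((n−s)−(k_1+…+k_j))! ) · z(k_1)⋯z(k_j) + Σ_{r=0}^{min(M_0,n)} α_{0,r} · n!/(n−r)!, with the convention 0^0 = 1. -/
open PowerSeries Finset Nat

namespace PowerSeries

section CommSemiring
variable {R : Type*} [CommSemiring R]

theorem coeff_pow_eq_sum_antidiagonalTuple (f : R⟦X⟧) (j n : ℕ) :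
    coeff n (f ^ j) = ∑ l ∈ Finset.Nat.antidiagonalTuple j n, ∏ i, coeff (l i) f := by
  rw [← Fin.prod_const, coeff_prod, finsuppAntidiag, sum_map,
    ← piAntidiag_univ_fin_eq_antidiagonalTuple]
  exact sum_attach (piAntidiag univ n) fun l => ∏ i, coeff (l i) f

theorem coeff_trunc_mul (M k : ℕ) (f g : R⟦X⟧) :
    coeff k ((trunc (M + 1) f : R⟦X⟧) * g) =
      ∑ s ∈ range (min M k + 1), coeff s f * coeff (k - s) g := by
  have hfilter : {s ∈ range (k + 1) | s < M + 1} = range (min M k + 1) := by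
    ext s; simp only [mem_filter, mem_range]; omega
  rw [coeff_mul, Finset.Nat.sum_antidiagonal_eq_sum_range_succ
    (fun i j => coeff i (trunc (M + 1) f : R⟦X⟧) * coeff j g), ← hfilter, sum_filter]
  simp only [Polynomial.coeff_coe, coeff_trunc, ite_mul, zero_mul]

noncomputable def egfCoeff (F : R⟦X⟧) (n : ℕ) : R :=
  n ! * coeff n F

theorem egfCoeff_succ (F : R⟦X⟧) (n : ℕ) :
    egfCoeff F (n + 1) = egfCoeff (d⁄dX R F) n := by
  rw [egfCoeff, egfCoeff, coeff_derivative, factorial_succ]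
  push_cast
  ring

end CommSemiring

section Field
variable {K : Type*} [Field K] [CharZero K]

theorem coeff_exp_eq_inv_factorial (n : ℕ) : coeff n (exp K) = (n ! : K)⁻¹ := by
  simp [coeff_exp]

theorem factorial_mul_coeff_exp {n k : ℕ} (h : k ≤ n) :
    (n ! : K) * coeff (n - k) (exp K) = n.descFactorial k := by
  rw [coeff_exp_eq_inv_factorial, ← factorial_mul_descFactorial h, cast_mul,
    mul_right_comm, mul_inv_cancel₀ (cast_ne_zero.2 (factorial_ne_zero _)), one_mul]

theorem pow_succ_mul_exp (A : K⟦X⟧) (j : ℕ) :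
    A ^ (j + 1) * exp K = (A * exp K) ^ (j + 1) * rescale (-(j : K)) (exp K) := by
  rw [mul_pow, exp_pow_eq_rescale_exp, mul_assoc, exp_mul_exp_eq_exp_add]
  push_cast
  rw [add_neg_cancel_comm, rescale_one, RingHom.id_apply]

theorem egfCoeff_mul_exp (A : K⟦X⟧) (n : ℕ) :
    egfCoeff (A * exp K) n = ∑ k ∈ range (n + 1), coeff k A * n.descFactorial k := by
  rw [egfCoeff, coeff_mul, Finset.Nat.sum_antidiagonal_eq_sum_range_succ
    (fun i j => coeff i A * coeff j (exp K)), mul_sum]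
  refine sum_congr rfl fun k hk => ?_
  rw [mul_left_comm, factorial_mul_coeff_exp (by simp only [mem_range] at hk; omega)]

theorem coeff_pow_mul_exp (A : K⟦X⟧) {j : ℕ} (hj : 1 ≤ j) (ν : ℕ) :
    coeff ν (A ^ j * exp K) =
      ∑ t ∈ range (ν + 1), ∑ k ∈ Finset.Nat.antidiagonalTuple j t,
        ((-1 : K) ^ (t + ν) / ∏ i, ((k i)! : K)) *
          (((j - 1 : ℕ) : K) ^ (ν - t) / ((ν - t)! : K)) * ∏ i, egfCoeff (A * exp K) (k i) := by
  obtain ⟨j, rfl⟩ : ∃ i, j = i + 1 := ⟨j - 1, by omega⟩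
  rw [pow_succ_mul_exp, coeff_mul, Finset.Nat.sum_antidiagonal_eq_sum_range_succ
    (fun i j => coeff i _ * coeff j _), Nat.add_sub_cancel]
  refine sum_congr rfl fun t ht => ?_
  have hsign : (-1 : K) ^ (t + ν) = (-1) ^ (ν - t) := by
    simp only [mem_range] at ht
    rw [show t + ν = (ν - t) + 2 * t by omega, pow_add, pow_mul, neg_one_sq, one_pow, mul_one]
  rw [coeff_pow_eq_sum_antidiagonalTuple, coeff_rescale, coeff_exp_eq_inv_factorial, sum_mul]
  refine sum_congr rfl fun k _ => ?_
  have hfac : ∏ i, ((k i)! : K) ≠ 0 :=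
    prod_ne_zero_iff.2 fun i _ => cast_ne_zero.2 (factorial_ne_zero _)
  simp only [egfCoeff, prod_mul_distrib]
  rw [hsign, neg_pow]
  field_simp

end Field

end PowerSeries

theorem fwdDiffSeq_egfCoeff_mul_exp (A : ℝ⟦X⟧) :
    fwdDiffSeq (egfCoeff (A * exp ℝ)) = egfCoeff (d⁄dX ℝ A * exp ℝ) := by
  funext n
  rw [fwdDiffSeq, egfCoeff_succ, Derivation.leibniz, derivative_exp]
  simp only [egfCoeff, smul_eq_mul, map_add, mul_comm (exp ℝ)]
  ring

theorem iterate_fwdDiffSeq_egfCoeff_mul_exp (A : ℝ⟦X⟧) (m : ℕ) :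
    fwdDiffSeq^[m] (egfCoeff (A * exp ℝ)) = egfCoeff ((d⁄dX ℝ)^[m] A * exp ℝ) := by
  induction m with
  | zero => rfl
  | succ m ih =>
    rw [Function.iterate_succ_apply', Function.iterate_succ_apply', ih,
      fwdDiffSeq_egfCoeff_mul_exp]

theorem nonlinear_ode_discretization_general
    (m N : ℕ) (M : ℕ → ℕ) (α : ℕ → ℕ → ℝ) (b : ℕ → ℝ)
    (hode : ∀ k : ℕ,
      (Nat.descFactorial (k + m) m : ℝ) * b (k + m) =
        (∑ j ∈ Finset.Icc 1 N, ∑ s ∈ Finset.range (min (M j) k + 1), α j s *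
          ∑ i ∈ Finset.Nat.antidiagonalTuple j (k - s), ∏ t : Fin j, b (i t))
        + (if k ≤ M 0 then α 0 k else 0))
    (z : ℕ → ℝ)
    (hz : ∀ n : ℕ, z n = ∑ k ∈ Finset.range (n + 1), b k * (Nat.descFactorial n k : ℝ)) :
    ∀ n : ℕ,
      (fwdDiffSeq^[m] z) n =
        (Nat.factorial n : ℝ) *
          (∑ j ∈ Finset.Icc 1 N, ∑ s ∈ Finset.range (min (M j) n + 1), α j s *
            ∑ t ∈ Finset.range (n - s + 1), ∑ k ∈ Finset.Nat.antidiagonalTuple j t,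
              ((-1 : ℝ) ^ (t + (n - s)) / ∏ i : Fin j, (Nat.factorial (k i) : ℝ)) *
                (((j - 1 : ℕ) : ℝ) ^ ((n - s) - t) / (Nat.factorial ((n - s) - t) : ℝ)) *
                ∏ i : Fin j, z (k i))
        + ∑ r ∈ Finset.range (min (M 0) n + 1), α 0 r * (Nat.descFactorial n r : ℝ) := by
  have hz_egf : z = egfCoeff (mk b * exp ℝ) := funext fun n => by
    simp only [hz, egfCoeff_mul_exp, coeff_mk]
  have hode_series : (d⁄dX ℝ)^[m] (mk b) =
      ∑ j ∈ Icc 1 N, (trunc (M j + 1) (mk (α j)) : ℝ⟦X⟧) * mk b ^ j +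
        trunc (M 0 + 1) (mk (α 0)) := by
    ext k
    rw [coeff_iterate_derivative, coeff_mk, ← add_descFactorial_eq_ascFactorial]
    simp only [map_add, map_sum, coeff_trunc_mul, coeff_mk, coeff_pow_eq_sum_antidiagonalTuple,
      Polynomial.coeff_coe, coeff_trunc, Nat.lt_succ_iff]
    exact hode k
  intro n
  rw [hz_egf, iterate_fwdDiffSeq_egfCoeff_mul_exp, hode_series, egfCoeff, add_mul, sum_mul, map_add,
    map_sum, mul_add]
  congr 1
  · refine congrArg _ (sum_congr rfl fun j hj => ?_)
    rw [mul_assoc, coeff_trunc_mul]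
    refine sum_congr rfl fun s _ => ?_
    rw [coeff_mk, coeff_pow_mul_exp _ (mem_Icc.1 hj).1, ← hz_egf]
  · rw [coeff_trunc_mul, mul_sum]
    refine sum_congr rfl fun r hr => ?_
    rw [coeff_mk, mul_left_comm, factorial_mul_coeff_exp (by simp only [mem_range] at hr; omega)]

/-- Discretization of a nonlinear ODE with polynomial coefficients: the Taylor
coefficients of a formal power series solution yield an exact solution of the
associated nonlocal difference equation on the integer lattice. -/
theorem nonlinear_ode_discretization
    (m N : ℕ) (hN : 1 ≤ N) (M : ℕ → ℕ) (α : ℕ → ℕ → ℝ) (b : ℕ → ℝ)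
    (hode : ∀ k : ℕ,
      (Nat.descFactorial (k + m) m : ℝ) * b (k + m) =
        (∑ j ∈ Finset.Icc 1 N, ∑ s ∈ Finset.range (min (M j) k + 1), α j s *
          ∑ i ∈ Finset.Nat.antidiagonalTuple j (k - s), ∏ t : Fin j, b (i t))
        + (if k ≤ M 0 then α 0 k else 0))
    (z : ℕ → ℝ)
    (hz : ∀ n : ℕ, z n = ∑ k ∈ Finset.range (n + 1), b k * (Nat.descFactorial n k : ℝ)) :
    ∀ n : ℕ,
      (fwdDiffSeq^[m] z) n =
        (Nat.factorial n : ℝ) *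
          (∑ j ∈ Finset.Icc 1 N, ∑ s ∈ Finset.range (min (M j) n + 1), α j s *
            ∑ t ∈ Finset.range (n - s + 1), ∑ k ∈ Finset.Nat.antidiagonalTuple j t,
              ((-1 : ℝ) ^ (t + (n - s)) / ∏ i : Fin j, (Nat.factorial (k i) : ℝ)) *
                (((j - 1 : ℕ) : ℝ) ^ ((n - s) - t) / (Nat.factorial ((n - s) - t) : ℝ)) *
                ∏ i : Fin j, z (k i))
        + ∑ r ∈ Finset.range (min (M 0) n + 1), α 0 r * (Nat.descFactorial n r : ℝ) :=
  nonlinear_ode_discretization_general m N M α b hode z hz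
end

section
/- Let p ≥ 1 be an integer and let k_1,…,k_p, n ∈ ℕ with k_1+…+k_p ≤ n. Then Σ over all tuples (l_1,…,l_p) ∈ ℕ^p with l_i ≥ k_i for each i and l_1+…+l_p ≤ n of (−1)^{l_1+…+l_p} · (∏_{i=1}^{p} 1/(l_i−k_i)!) · n!/(n−(l_1+…+l_p))! equals (−1)^n · n! · (p−1)^{n−(k_1+…+k_p)} / (n−(k_1+…+k_p))!, with the convention 0^0 = 1. -/
/-!
Substituting `l = k + m`, the inner sum over the tuples `l ≥ k` of total `t` becomes
`∑_{m_1 + ⋯ + m_p = t - |k|} ∏ 1 / m_i!`, which the multinomial theorem evaluates to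
`p ^ (t - |k|) / (t - |k|)!`. With `N = n - |k|` and `s = t - |k|`, what remains is
`(-1)^|k| n! ∑_s (-p)^s / (s! (N - s)!) = (-1)^|k| n! (1 - p)^N / N!` by the binomial theorem.
-/

open Finset Nat

theorem sum_filter_antidiagonalTuple_le_comp_sub {M : Type*} [AddCommMonoid M] (p : ℕ)
    (k : Fin p → ℕ) (t : ℕ) (f : (Fin p → ℕ) → M) (ht : ∑ i, k i ≤ t) :
    ∑ l ∈ (antidiagonalTuple p t).filter (fun l => ∀ i, k i ≤ l i), f (fun i => l i - k i)
      = ∑ m ∈ antidiagonalTuple p (t - ∑ i, k i), f m := by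
  refine sum_nbij' (fun l i => l i - k i) (fun m i => k i + m i) ?_ ?_ ?_ ?_ fun _ _ => rfl
  · intro l hl
    simp only [mem_filter, mem_antidiagonalTuple] at hl ⊢
    rw [sum_tsub_distrib _ fun i _ => hl.2 i, hl.1]
  · intro m hm
    simp only [mem_filter, mem_antidiagonalTuple] at hm ⊢
    exact ⟨by rw [sum_add_distrib, hm, Nat.add_sub_cancel' ht], fun i => Nat.le_add_right _ _⟩
  · intro l hl
    simp only [mem_filter] at hl
    funext i
    exact Nat.add_sub_cancel' (hl.2 i)
  · intro m _
    funext i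
    exact Nat.add_sub_cancel_left _ _

theorem filter_antidiagonalTuple_le_eq_empty (p : ℕ) (k : Fin p → ℕ) (t : ℕ)
    (ht : t < ∑ i, k i) :
    (antidiagonalTuple p t).filter (fun l => ∀ i, k i ≤ l i) = ∅ :=
  filter_eq_empty_iff.2 fun _ hl hkl =>
    (sum_le_sum fun i _ => hkl i).not_gt (mem_antidiagonalTuple.1 hl ▸ ht)

section

variable {K : Type*} [Field K] [CharZero K]

theorem Nat.cast_multinomial_eq_div {ι : Type*} (s : Finset ι) (f : ι → ℕ) :
    (multinomial s f : K) = (∑ i ∈ s, f i)! / ∏ i ∈ s, ((f i)! : K) := by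
  rw [eq_div_iff (prod_ne_zero_iff.2 fun i _ => by exact_mod_cast factorial_ne_zero _), mul_comm]
  exact_mod_cast multinomial_spec s f

theorem sum_antidiagonalTuple_prod_inv_factorial (p s : ℕ) :
    ∑ m ∈ antidiagonalTuple p s, ∏ i, (1 : K) / (m i)! = (p : K) ^ s / s ! := by
  have multinomial_thm := sum_pow_eq_sum_piAntidiag (univ : Finset (Fin p)) (fun _ => (1 : K)) s
  simp only [sum_const, Finset.card_fin, nsmul_eq_mul, mul_one, one_pow,
    prod_const_one, piAntidiag_univ_fin_eq_antidiagonalTuple] at multinomial_thm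
  rw [multinomial_thm, sum_div]
  refine sum_congr rfl fun m hm => ?_
  rw [Nat.cast_multinomial_eq_div, mem_antidiagonalTuple.1 hm,
    div_div_cancel_left' (by exact_mod_cast factorial_ne_zero _)]
  simp [prod_inv_distrib]

theorem sum_filter_antidiagonalTuple_prod_inv_factorial_sub (p : ℕ) (k : Fin p → ℕ) (t : ℕ) :
    ∑ l ∈ (antidiagonalTuple p t).filter (fun l => ∀ i, k i ≤ l i),
        ∏ i, (1 : K) / (l i - k i)!
      = if ∑ i, k i ≤ t then (p : K) ^ (t - ∑ i, k i) / (t - ∑ i, k i)! else 0 := by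
  split_ifs with ht
  · rw [sum_filter_antidiagonalTuple_le_comp_sub p k t (fun m => ∏ i, (1 : K) / (m i)!) ht,
      sum_antidiagonalTuple_prod_inv_factorial]
  · rw [filter_antidiagonalTuple_le_eq_empty p k t (not_le.1 ht), sum_empty]

theorem add_pow_div_factorial (x y : K) (N : ℕ) :
    (x + y) ^ N / N ! = ∑ s ∈ range (N + 1), x ^ s * y ^ (N - s) / (s ! * (N - s)!) := by
  rw [add_pow, sum_div]
  refine sum_congr rfl fun s hs => ?_
  rw [cast_choose K (Nat.lt_succ_iff.1 (mem_range.1 hs))]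
  have : (N ! : K) ≠ 0 := by exact_mod_cast factorial_ne_zero _
  field_simp

end

/-- Closed-form evaluation of the combinatorial kernel `K_{n,k_1,…,k_p}` appearing in the
discretization of nonlinear ODEs. -/
theorem kernel_closed_form (p : ℕ) (hp : 1 ≤ p) (k : Fin p → ℕ) (n : ℕ)
    (hkn : ∑ i, k i ≤ n) :
    ∑ t ∈ Finset.range (n + 1),
      ∑ l ∈ (Finset.Nat.antidiagonalTuple p t).filter (fun l => ∀ i, k i ≤ l i),
        (-1 : ℝ) ^ t * (∏ i : Fin p, (1 : ℝ) / (Nat.factorial (l i - k i) : ℝ)) *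
          (Nat.factorial n : ℝ) / (Nat.factorial (n - t) : ℝ)
    = (-1 : ℝ) ^ n * (Nat.factorial n : ℝ) *
        ((p - 1 : ℕ) : ℝ) ^ (n - ∑ i, k i) / (Nat.factorial (n - ∑ i, k i) : ℝ) := by
  obtain ⟨N, rfl⟩ : ∃ N, n = ∑ i, k i + N := ⟨n - ∑ i, k i, by omega⟩
  calc _ = ∑ t ∈ range (∑ i, k i + N + 1), (-1 : ℝ) ^ t * (∑ i, k i + N)! / (∑ i, k i + N - t)! *
        ∑ l ∈ (antidiagonalTuple p t).filter (fun l => ∀ i, k i ≤ l i),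
          ∏ i, (1 : ℝ) / (l i - k i)! := by
        simp only [mul_sum]
        exact sum_congr rfl fun t _ => sum_congr rfl fun l _ => by ring
    _ = ∑ s ∈ range (N + 1), (-1 : ℝ) ^ (∑ i, k i + s) * (∑ i, k i + N)! / (N - s)! *
          ((p : ℝ) ^ s / s !) := by
        rw [add_assoc, sum_range_add, sum_eq_zero, zero_add]
        · refine sum_congr rfl fun s _ => ?_
          rw [sum_filter_antidiagonalTuple_prod_inv_factorial_sub, if_pos (Nat.le_add_right _ _),
            Nat.add_sub_cancel_left, Nat.add_sub_add_left]
        · intro t ht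
          rw [sum_filter_antidiagonalTuple_prod_inv_factorial_sub,
            if_neg (not_le.2 (mem_range.1 ht)), mul_zero]
    _ = (-1 : ℝ) ^ (∑ i, k i) * (∑ i, k i + N)! * ((-p + 1 : ℝ) ^ N / N !) := by
        rw [add_pow_div_factorial, mul_sum]
        refine sum_congr rfl fun s _ => ?_
        rw [neg_pow, one_pow]
        ring
    _ = _ := by
        rw [Nat.add_sub_cancel_left, Nat.cast_sub hp, show (-p + 1 : ℝ) = -1 * (p - 1) by ring,
          mul_pow, pow_add]
        ring
end

section
/- Let N ∈ ℕ and a_0,…,a_N ∈ ℝ. Let b : ℕ → ℝ be any sequence and define z(n) = Σ_{k=0}^{n} b_k · n!/(n−k)!. Then Σ_{j=0}^{N} a_j · (Δ^j z)(n) = 0 for all n ∈ ℕ if and only if Σ_{j=0}^{N} a_j · ((k+j)!/k!) · b_{k+j} = 0 for all k ∈ ℕ. -/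
open Finset

namespace Nat

theorem succ_descFactorial_succ_eq_add_s10 (n k : ℕ) :
    (n + 1).descFactorial (k + 1) = n.descFactorial (k + 1) + (k + 1) * n.descFactorial k := by
  rw [succ_descFactorial_succ, descFactorial_succ]
  rcases le_or_gt k n with hkn | hnk
  · rw [← add_mul]
    congr 1
    omega
  · simp [descFactorial_eq_zero_iff_lt.2 hnk]

end Nat

def newtonSeries (d : ℕ → ℝ) (n : ℕ) : ℝ :=
  ∑ k ∈ range (n + 1), d k * n.descFactorial k

theorem newtonSeries_eq_sum_range {m n : ℕ} (d : ℕ → ℝ) (hnm : n < m) :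
    newtonSeries d n = ∑ k ∈ range m, d k * n.descFactorial k := by
  refine sum_subset (range_subset_range.2 hnm) fun k _ hkn => ?_
  rw [Nat.descFactorial_eq_zero_iff_lt.2 (by simpa using hkn), Nat.cast_zero, mul_zero]

theorem newtonSeries_eq_sum_range_add_factorial (d : ℕ → ℝ) (n : ℕ) :
    newtonSeries d n = ∑ k ∈ range n, d k * n.descFactorial k + d n * n.factorial := by
  rw [newtonSeries, sum_range_succ, Nat.descFactorial_self]

theorem fwdDiffSeq_newtonSeries (d : ℕ → ℝ) :
    fwdDiffSeq (newtonSeries d) = newtonSeries fun k => (k + 1) * d (k + 1) := by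
  ext n
  rw [fwdDiffSeq, newtonSeries_eq_sum_range d (n.lt_succ_self.trans n.succ.lt_succ_self),
    newtonSeries_eq_sum_range _ (n + 1).lt_succ_self, ← sum_sub_distrib, sum_range_succ']
  simp only [Nat.succ_descFactorial_succ_eq_add_s10, Nat.descFactorial_zero]
  push_cast
  simp only [sub_self, add_zero]
  exact sum_congr rfl fun k _ => by ring

theorem fwdDiffSeq_iterate_newtonSeries (d : ℕ → ℝ) (j : ℕ) :
    fwdDiffSeq^[j] (newtonSeries d) =
      newtonSeries fun k => (k + j).descFactorial j * d (k + j) := by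
  induction j with
  | zero => simp
  | succ j ih =>
    rw [Function.iterate_succ_apply', ih, fwdDiffSeq_newtonSeries]
    congr 1
    ext k
    rw [show k + (j + 1) = k + 1 + j by ring, Nat.descFactorial_succ,
      show k + 1 + j - j = k + 1 by omega]
    push_cast
    ring

theorem sum_mul_newtonSeries {ι : Type*} (s : Finset ι) (a : ι → ℝ) (d : ι → ℕ → ℝ) (n : ℕ) :
    ∑ j ∈ s, a j * newtonSeries (d j) n = newtonSeries (fun k => ∑ j ∈ s, a j * d j k) n := by
  simp only [newtonSeries, mul_sum, sum_mul]
  rw [sum_comm]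
  exact sum_congr rfl fun k _ => sum_congr rfl fun j _ => by ring

theorem newtonSeries_eq_zero_iff {d : ℕ → ℝ} : (∀ n, newtonSeries d n = 0) ↔ ∀ k, d k = 0 := by
  refine ⟨fun h k => ?_, fun h n => sum_eq_zero fun k _ => by rw [h k, zero_mul]⟩
  induction k using Nat.strong_induction_on with
  | _ k ih =>
    have hlower : ∑ m ∈ range k, d m * k.descFactorial m = 0 :=
      sum_eq_zero fun m hm => by rw [ih m (mem_range.1 hm), zero_mul]
    have hk := h k
    rw [newtonSeries_eq_sum_range_add_factorial, hlower, zero_add] at hk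
    exact (mul_eq_zero.1 hk).resolve_right (by positivity)

/-- Constant-coefficient case of the categorical correspondence: the interpolating
transform of a sequence solves the difference equation if and only if the sequence is a
formal power series solution of the corresponding ODE. -/
theorem constant_coefficient_correspondence (N : ℕ) (a : ℕ → ℝ) (b : ℕ → ℝ) (z : ℕ → ℝ)
    (hz : ∀ n : ℕ, z n = ∑ k ∈ Finset.range (n + 1), b k * (Nat.descFactorial n k : ℝ)) :
    (∀ n : ℕ, ∑ j ∈ Finset.range (N + 1), a j * (fwdDiffSeq^[j] z) n = 0) ↔
    (∀ k : ℕ, ∑ j ∈ Finset.range (N + 1),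
      a j * (Nat.descFactorial (k + j) j : ℝ) * b (k + j) = 0) := by
  obtain rfl : z = newtonSeries b := funext hz
  simp only [fwdDiffSeq_iterate_newtonSeries, sum_mul_newtonSeries, newtonSeries_eq_zero_iff,
    mul_assoc]
end

section
/- Let ω ∈ ℝ. Define s_k = ω^k · sin(kπ/2)/k! and c_k = ω^k · cos(kπ/2)/k! for k ∈ ℕ (these are the Taylor coefficients at 0 of sin(ωx) and cos(ωx)). Then the sequences z¹(n) = Σ_{k=0}^{n} s_k · n!/(n−k)! and z²(n) = Σ_{k=0}^{n} c_k · n!/(n−k)! both satisfy the recurrence z(n+2) − 2·z(n+1) + (ω²+1)·z(n) = 0 for all n ∈ ℕ. -/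
/-! The generating sum is a binomial expansion: since `n!/(n-k)! = k! * C(n,k)`, one has
`Σ_k (a^k/k!) · n!/(n-k)! = (1 + a)^n`. The Taylor coefficients of `cos(ωx)` and `sin(ωx)` are the
real and imaginary parts of `(iω)^k/k!`, so `z₂ n + i z₁ n = (1 + iω)^n`, and `1 + iω` is a root of
the characteristic polynomial `X² - 2X + (ω² + 1)` of the recurrence. -/

open Complex Finset Nat Real

theorem Complex.I_pow_eq_cos_add_sin_mul_I (k : ℕ) :
    I ^ k = Real.cos (k * π / 2) + Real.sin (k * π / 2) * I := by
  conv_lhs => rw [← exp_pi_div_two_mul_I, ← exp_nat_mul, ← mul_assoc, exp_mul_I]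
  push_cast
  ring_nf

theorem sum_range_pow_div_factorial_mul_descFactorial {K : Type*} [Field K] [CharZero K]
    (a : K) (n : ℕ) :
    ∑ k ∈ range (n + 1), a ^ k / k ! * n.descFactorial k = (1 + a) ^ n := by
  rw [add_comm 1 a, add_pow]
  refine sum_congr rfl fun k _ => ?_
  rw [descFactorial_eq_factorial_mul_choose, one_pow, mul_one]
  have hk : (k ! : K) ≠ 0 := Nat.cast_ne_zero.mpr (factorial_ne_zero k)
  push_cast
  field_simp

/-- The discrete classical harmonic oscillator: the interpolating transforms of the
Taylor coefficients of sin(ωx) and cos(ωx) solve the recurrence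
z(n+2) − 2z(n+1) + (ω²+1)z(n) = 0. -/
theorem discrete_harmonic_oscillator (ω : ℝ) (s c : ℕ → ℝ)
    (hs : ∀ k : ℕ, s k = ω ^ k * Real.sin (k * Real.pi / 2) / (Nat.factorial k : ℝ))
    (hc : ∀ k : ℕ, c k = ω ^ k * Real.cos (k * Real.pi / 2) / (Nat.factorial k : ℝ))
    (z₁ z₂ : ℕ → ℝ)
    (hz₁ : ∀ n : ℕ, z₁ n = ∑ k ∈ Finset.range (n + 1), s k * (Nat.descFactorial n k : ℝ))
    (hz₂ : ∀ n : ℕ, z₂ n = ∑ k ∈ Finset.range (n + 1), c k * (Nat.descFactorial n k : ℝ)) :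
    ∀ n : ℕ,
      z₁ (n + 2) - 2 * z₁ (n + 1) + (ω ^ 2 + 1) * z₁ n = 0 ∧
      z₂ (n + 2) - 2 * z₂ (n + 1) + (ω ^ 2 + 1) * z₂ n = 0 := by
  have hz : ∀ n, (z₂ n : ℂ) + z₁ n * I = (1 + ω * I) ^ n := by
    intro n
    rw [hz₁, hz₂, ← sum_range_pow_div_factorial_mul_descFactorial]
    push_cast
    rw [sum_mul, ← sum_add_distrib]
    refine sum_congr rfl fun k _ => ?_
    rw [hs, hc, mul_pow, I_pow_eq_cos_add_sin_mul_I]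
    push_cast
    ring
  have hroot : (1 + ω * I) ^ 2 - 2 * (1 + ω * I) + (ω ^ 2 + 1) = 0 := by
    linear_combination (ω : ℂ) ^ 2 * I_sq
  intro n
  have hrec : (⟨z₂ (n + 2) - 2 * z₂ (n + 1) + (ω ^ 2 + 1) * z₂ n,
      z₁ (n + 2) - 2 * z₁ (n + 1) + (ω ^ 2 + 1) * z₁ n⟩ : ℂ) = 0 := by
    rw [mk_eq_add_mul_I]
    push_cast
    linear_combination hz (n + 2) - 2 * hz (n + 1) + (ω ^ 2 + 1 : ℂ) * hz n
      + (1 + ω * I) ^ n * hroot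
  obtain ⟨h₂, h₁⟩ := Complex.ext_iff.mp hrec
  exact ⟨h₁, h₂⟩
end

section
/- Let ω, q, A, φ ∈ ℝ with q² ≤ 1. Let f : ℝ → ℝ be f(x) = A·e^{−qωx}·sin(√(1−q²)·ωx + φ), and let g_k = f^{(k)}(0)/k! be its k-th Taylor coefficient at 0. Then the sequence z(n) = Σ_{k=0}^{n} g_k · n!/(n−k)! satisfies z(n+2) + 2(qω−1)·z(n+1) + (ω² − 2qω + 1)·z(n) = 0 for all n ∈ ℕ. -/
open Finset Real

private lemma iterDeriv_lin (c c' : ℝ) (u v : ℝ → ℝ) (hu : ContDiff ℝ (⊤ : ℕ∞) u)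
    (hv : ContDiff ℝ (⊤ : ℕ∞) v) (k : ℕ) (x : ℝ) :
    iteratedDeriv k (fun y => c * u y + c' * v y) x
      = c * iteratedDeriv k u x + c' * iteratedDeriv k v x := by
  have h1 : iteratedDeriv k (fun y => c * u y + c' * v y) x
      = iteratedDeriv k (fun y => c * u y) x + iteratedDeriv k (fun y => c' * v y) x := by
    simp_rw [← iteratedDerivWithin_univ]
    exact iteratedDerivWithin_add (Set.mem_univ x) uniqueDiffOn_univ
      ((hu.of_le (mod_cast le_top)).const_smul c).contDiffWithinAt ((hv.of_le (mod_cast le_top)).const_smul c').contDiffWithinAt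
  rw [h1]
  simp_rw [← iteratedDerivWithin_univ]
  rw [iteratedDerivWithin_const_mul (Set.mem_univ x) uniqueDiffOn_univ c
      (hu.of_le (mod_cast le_top)).contDiffWithinAt,
    iteratedDerivWithin_const_mul (Set.mem_univ x) uniqueDiffOn_univ c'
      (hv.of_le (mod_cast le_top)).contDiffWithinAt]

private lemma descFact_cast (n k : ℕ) :
    (((n+1).descFactorial (k+1) : ℕ) : ℝ)
      = ((n.descFactorial (k+1) : ℕ) : ℝ) + ((k : ℝ) + 1) * ((n.descFactorial k : ℕ) : ℝ) := by
  rcases le_or_gt k n with h | h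
  · rw [Nat.succ_descFactorial_succ, Nat.descFactorial_succ]
    push_cast [h]
    ring
  · have h0 : n.descFactorial k = 0 := Nat.descFactorial_eq_zero_iff_lt.mpr h
    have h1 : n.descFactorial (k+1) = 0 :=
      Nat.descFactorial_eq_zero_iff_lt.mpr (h.trans (Nat.lt_succ_self k))
    have h2 : (n+1).descFactorial (k+1) = 0 :=
      Nat.descFactorial_eq_zero_iff_lt.mpr (by omega)
    simp only [h0, h1, h2, Nat.cast_zero]
    ring

private lemma key_sum (a : ℕ → ℝ) (n : ℕ) :
    ∑ k ∈ range (n+2), a k * ((n+1).descFactorial k : ℝ)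
      = ∑ k ∈ range (n+1), a k * (n.descFactorial k : ℝ)
        + ∑ k ∈ range (n+1), ((k : ℝ) + 1) * a (k+1) * (n.descFactorial k : ℝ) := by
  rw [Finset.sum_range_succ' (fun k => a k * ((n+1).descFactorial k : ℝ)) (n+1)]
  have h1 : ∑ k ∈ range (n+1), a (k+1) * (((n+1).descFactorial (k+1) : ℕ) : ℝ)
      = ∑ k ∈ range (n+1), (a (k+1) * ((n.descFactorial (k+1) : ℕ) : ℝ)
          + ((k : ℝ) + 1) * a (k+1) * ((n.descFactorial k : ℕ) : ℝ)) := by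
    refine Finset.sum_congr rfl fun k _ => ?_
    rw [descFact_cast]; ring
  rw [h1, Finset.sum_add_distrib]
  have h2 : ∑ k ∈ range (n+1), a (k+1) * ((n.descFactorial (k+1) : ℕ) : ℝ)
        + a 0 * ((n+1).descFactorial 0 : ℝ)
      = ∑ k ∈ range (n+1), a k * (n.descFactorial k : ℝ) := by
    have h3 := Finset.sum_range_succ' (fun k => a k * ((n.descFactorial k : ℕ) : ℝ)) (n+1)
    have h4 : ∑ k ∈ range (n+2), a k * ((n.descFactorial k : ℕ) : ℝ)
        = ∑ k ∈ range (n+1), a k * ((n.descFactorial k : ℕ) : ℝ) := by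
      rw [Finset.sum_range_succ]
      have : n.descFactorial (n+1) = 0 :=
        Nat.descFactorial_eq_zero_iff_lt.mpr (Nat.lt_succ_self n)
      simp [this]
    simp only [Nat.descFactorial_zero, Nat.cast_one, mul_one] at h3 ⊢
    rw [← h3, h4]
  linarith [h2]

/-- The discrete damped harmonic oscillator: the interpolating transform of the Taylor
coefficients of the general solution of the damped oscillator solves the recurrence
z(n+2) + 2(qω−1)z(n+1) + (ω² − 2qω + 1)z(n) = 0. -/
theorem discrete_damped_oscillator (ω q A φ : ℝ) (hq : q ^ 2 ≤ 1)
    (f : ℝ → ℝ)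
    (hf : ∀ x : ℝ, f x = A * Real.exp (-(q * ω * x)) * Real.sin (Real.sqrt (1 - q ^ 2) * ω * x + φ))
    (g : ℕ → ℝ) (hg : ∀ k : ℕ, g k = iteratedDeriv k f 0 / (Nat.factorial k : ℝ))
    (z : ℕ → ℝ)
    (hz : ∀ n : ℕ, z n = ∑ k ∈ Finset.range (n + 1), g k * (Nat.descFactorial n k : ℝ)) :
    ∀ n : ℕ,
      z (n + 2) + 2 * (q * ω - 1) * z (n + 1) + (ω ^ 2 - 2 * q * ω + 1) * z n = 0 := by
  set r := Real.sqrt (1 - q ^ 2) with hrdef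
  have hr2 : r ^ 2 = 1 - q ^ 2 := Real.sq_sqrt (by linarith)
  set G : ℝ → ℝ := fun x => A * Real.exp (-(q * ω * x)) * Real.cos (r * ω * x + φ) with hGdef
  have hfF : f = fun x => A * Real.exp (-(q * ω * x)) * Real.sin (r * ω * x + φ) :=
    funext hf
  -- derivatives
  have hF' : ∀ x, HasDerivAt f (-(q * ω) * f x + r * ω * G x) x := by
    intro x
    have h1 : HasDerivAt (fun y : ℝ => -(q * ω * y)) (-(q * ω)) x := by
      simpa using ((hasDerivAt_id x).const_mul (q * ω)).fun_neg
    have he : HasDerivAt (fun y => Real.exp (-(q * ω * y)))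
        (Real.exp (-(q * ω * x)) * (-(q * ω))) x := h1.exp
    have h2 : HasDerivAt (fun y : ℝ => r * ω * y + φ) (r * ω) x := by
      simpa using ((hasDerivAt_id x).const_mul (r * ω)).add_const φ
    have hs : HasDerivAt (fun y => Real.sin (r * ω * y + φ))
        (Real.cos (r * ω * x + φ) * (r * ω)) x := h2.sin
    have H := (he.const_mul A).fun_mul hs
    rw [hfF]
    refine H.congr_deriv ?_
    simp only [hGdef, hf]
    ring
  have hG' : ∀ x, HasDerivAt G (-(q * ω) * G x - r * ω * f x) x := by
    intro x
    have h1 : HasDerivAt (fun y : ℝ => -(q * ω * y)) (-(q * ω)) x := by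
      simpa using ((hasDerivAt_id x).const_mul (q * ω)).fun_neg
    have he : HasDerivAt (fun y => Real.exp (-(q * ω * y)))
        (Real.exp (-(q * ω * x)) * (-(q * ω))) x := h1.exp
    have h2 : HasDerivAt (fun y : ℝ => r * ω * y + φ) (r * ω) x := by
      simpa using ((hasDerivAt_id x).const_mul (r * ω)).add_const φ
    have hc : HasDerivAt (fun y => Real.cos (r * ω * y + φ))
        (-Real.sin (r * ω * x + φ) * (r * ω)) x := h2.cos
    have H := (he.const_mul A).fun_mul hc
    refine H.congr_deriv ?_
    simp only [hGdef, hf]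
    ring
  have hderiv : deriv f = fun x => -(q * ω) * f x + r * ω * G x :=
    funext fun x => (hF' x).deriv
  have hb1 : ContDiff ℝ (⊤ : ℕ∞) (fun x : ℝ => -(q * ω * x)) := by fun_prop
  have hb2 : ContDiff ℝ (⊤ : ℕ∞) (fun x : ℝ => r * ω * x + φ) := by fun_prop
  have hsmoothf : ContDiff ℝ (⊤ : ℕ∞) f := by
    rw [hfF]
    exact (contDiff_const.mul (Real.contDiff_exp.comp hb1)).mul
      (Real.contDiff_sin.comp hb2)
  have hsmoothG : ContDiff ℝ (⊤ : ℕ∞) G := by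
    rw [hGdef]
    exact (contDiff_const.mul (Real.contDiff_exp.comp hb1)).mul
      (Real.contDiff_cos.comp hb2)
  have hsmoothd : ContDiff ℝ (⊤ : ℕ∞) (deriv f) := by
    rw [hderiv]
    exact (hsmoothf.const_smul (-(q * ω))).add (hsmoothG.const_smul (r * ω))
  have hd2 : deriv (deriv f) = fun x => -(2 * (q * ω)) * deriv f x + -(ω ^ 2) * f x := by
    funext x
    have H : HasDerivAt (fun y => -(q * ω) * f y + r * ω * G y)
        (-(q * ω) * (-(q * ω) * f x + r * ω * G x)
          + r * ω * (-(q * ω) * G x - r * ω * f x)) x :=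
      ((hF' x).const_mul _).add ((hG' x).const_mul _)
    rw [hderiv, H.deriv]
    beta_reduce
    linear_combination (-(ω ^ 2 * f x)) * hr2
  -- recurrence on iterated derivatives
  have hrec : ∀ k : ℕ, iteratedDeriv (k+2) f 0
      = -(2 * (q * ω)) * iteratedDeriv (k+1) f 0 + -(ω ^ 2) * iteratedDeriv k f 0 := by
    intro k
    have e1 : iteratedDeriv (k+2) f = iteratedDeriv k (deriv (deriv f)) := by
      rw [show k + 2 = (k + 1) + 1 from rfl, iteratedDeriv_succ', iteratedDeriv_succ']
    have e2 : iteratedDeriv (k+1) f = iteratedDeriv k (deriv f) := iteratedDeriv_succ'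
    rw [e1, e2, hd2, iterDeriv_lin _ _ _ _ hsmoothd hsmoothf]
  -- recurrence on g
  have hgrec : ∀ k : ℕ, ((k : ℝ) + 2) * ((k : ℝ) + 1) * g (k + 2)
      + 2 * (q * ω) * (((k : ℝ) + 1) * g (k + 1)) + ω ^ 2 * g k = 0 := by
    intro k
    have hk : ((k.factorial : ℝ)) ≠ 0 := Nat.cast_ne_zero.mpr k.factorial_ne_zero
    have hf2 : ((k + 2).factorial : ℝ) = ((k : ℝ) + 2) * ((k : ℝ) + 1) * (k.factorial : ℝ) := by
      rw [Nat.factorial_succ, Nat.factorial_succ]; push_cast; ring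
    have hf1 : ((k + 1).factorial : ℝ) = ((k : ℝ) + 1) * (k.factorial : ℝ) := by
      rw [Nat.factorial_succ]; push_cast; ring
    rw [hg (k + 2), hg (k + 1), hg k, hrec k, hf2, hf1]
    field_simp
    ring
  -- the summation machinery
  set S1 : ℕ → ℝ := fun n => ∑ k ∈ range (n + 1),
    ((k : ℝ) + 1) * g (k + 1) * (n.descFactorial k : ℝ) with hS1
  have hA : ∀ n : ℕ, z (n + 1) = z n + S1 n := by
    intro n
    rw [hz (n + 1), hz n, hS1]
    exact key_sum g n
  have hB : ∀ n : ℕ, S1 (n + 1) = S1 n + ∑ k ∈ range (n + 1),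
      ((k : ℝ) + 2) * ((k : ℝ) + 1) * g (k + 2) * (n.descFactorial k : ℝ) := by
    intro n
    rw [hS1]
    simp only []
    rw [key_sum (fun k => ((k : ℝ) + 1) * g (k + 1)) n]
    congr 1
    refine Finset.sum_congr rfl fun k _ => ?_
    push_cast
    ring
  intro n
  have hz2 : z (n + 2) = z n + 2 * S1 n + ∑ k ∈ range (n + 1),
      ((k : ℝ) + 2) * ((k : ℝ) + 1) * g (k + 2) * (n.descFactorial k : ℝ) := by
    have := hA (n + 1)
    rw [hA n, hB n] at this
    linarith [this]
  rw [hz2, hA n, hz n, hS1]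
  have hzero : ∑ k ∈ range (n + 1),
      (((k : ℝ) + 2) * ((k : ℝ) + 1) * g (k + 2) * (n.descFactorial k : ℝ)
        + 2 * (q * ω) * (((k : ℝ) + 1) * g (k + 1) * (n.descFactorial k : ℝ))
        + ω ^ 2 * (g k * (n.descFactorial k : ℝ))) = 0 := by
    refine Finset.sum_eq_zero fun k _ => ?_
    have := hgrec k
    linear_combination ((n.descFactorial k : ℝ)) * this
  rw [Finset.sum_add_distrib, Finset.sum_add_distrib] at hzero
  rw [← Finset.mul_sum, ← Finset.mul_sum] at hzero
  ring_nf
  ring_nf at hzero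
  linarith [hzero]
end

section
/- Define g : ℕ → ℝ by g(2m) = (−1)^m/(2^m · m!) and g(2m+1) = 0 for m ∈ ℕ (the Taylor coefficients at 0 of e^{−x²/2}), and define z(n) = Σ_{k=0}^{n} g(k) · n!/(n−k)!. Then for every n ∈ ℕ: z(n+1) − z(n) + Σ_{k=0}^{n} Σ_{j=0}^{k−1} (−1)^{k−1−j} · (n! / (j! · (k−1−j)! · (n−k)!)) · z(j) = 0. -/
/-!
Expand `z` in its Newton series `z n = ∑ k, n.choose k * Δᵏz(0)`: by uniqueness of Newton
coefficients, `Δᵏz(0) = k! * g k`. By the alternating-sum formula for iterated differences, the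
`k`-th inner sum equals `n.choose k * k * Δᵏ⁻¹z(0)`, while
`z (n + 1) - z n = ∑ k, n.choose k * Δᵏ⁺¹z(0)`. The Taylor recurrence `(k + 2) g (k + 2) = -g k`
of `exp (-x²/2)` reads `Δᵏ⁺²z(0) = -(k + 1) Δᵏz(0)`, so the two sums cancel term by term, the
leftover `Δz(0) = g 1` being `0`.
-/

open Finset Nat fwdDiff

theorem fwdDiff_iter_eq_of_eq_sum_choose_smul {G : Type*} [AddCommGroup G] {f a : ℕ → G}
    (hf : ∀ n, f n = ∑ k ∈ range (n + 1), n.choose k • a k) (k : ℕ) :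
    Δ_[1] ^[k] f 0 = a k := by
  induction k using Nat.strong_induction_on with
  | _ k ih =>
    have newton := shift_eq_sum_fwdDiff_iter 1 f k 0
    have hlower : ∑ i ∈ range k, k.choose i • Δ_[1] ^[i] f 0 = ∑ i ∈ range k, k.choose i • a i :=
      sum_congr rfl fun i hi => by rw [ih i (mem_range.mp hi)]
    rw [zero_add, smul_eq_mul, mul_one, hf k, sum_range_succ, sum_range_succ, choose_self,
      one_smul, one_smul, hlower] at newton
    exact (add_left_cancel newton).symm

theorem sum_range_alternating_mul_factorial_div {K : Type*} [Field K] [CharZero K] (f : ℕ → K)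
    {k n : ℕ} (hkn : k ≤ n) :
    ∑ j ∈ range k, (-1 : K) ^ (k - 1 - j) *
        ((n ! : K) / ((j ! : K) * ((k - 1 - j)! : K) * ((n - k)! : K))) * f j =
      n.choose k * k * Δ_[1] ^[k - 1] f 0 := by
  obtain _ | m := k
  · simp
  rw [Nat.add_sub_cancel, fwdDiff_iter_eq_sum_shift, mul_sum]
  refine sum_congr rfl fun j hj => ?_
  have hjm : j ≤ m := Nat.lt_succ_iff.mp (mem_range.mp hj)
  have hfact : (n ! : K) = n.choose (m + 1) * (m + 1) * m.choose j *
      ((j ! : K) * ((m - j)! : K) * ((n - (m + 1))! : K)) := by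
    rw [← Nat.choose_mul_factorial_mul_factorial hkn, factorial_succ,
      ← Nat.choose_mul_factorial_mul_factorial hjm]
    push_cast
    ring
  rw [hfact, mul_div_cancel_right₀ _ (by simp [factorial_ne_zero]), zsmul_eq_mul, zero_add, smul_eq_mul, mul_one]
  push_cast
  ring

theorem factorial_mul_gaussian_coeff_add_two {K : Type*} [Field K] [CharZero K] {g : ℕ → K}
    (hgeven : ∀ m : ℕ, g (2 * m) = (-1 : K) ^ m / ((2 : K) ^ m * (m ! : K)))
    (hgodd : ∀ m : ℕ, g (2 * m + 1) = 0) (k : ℕ) :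
    ((k + 2)! : K) * g (k + 2) = -(k + 1) * ((k ! : K) * g k) := by
  rw [factorial_succ, factorial_succ]
  obtain ⟨m, rfl | rfl⟩ := Nat.even_or_odd' k
  · rw [show 2 * m + 2 = 2 * (m + 1) by ring, hgeven, hgeven, factorial_succ, pow_succ]
    push_cast
    field_simp
    ring
  · rw [show 2 * m + 1 + 2 = 2 * (m + 1) + 1 by ring, hgodd, hgodd]
    simp

/-- The difference equation for the Gaussian function: the interpolating transform of
the Taylor coefficients of exp(−x²/2) is an exact solution of the nonlocal recurrence
representing y' = −x·y on the integer lattice. -/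
theorem discrete_gaussian (g : ℕ → ℝ)
    (hgeven : ∀ m : ℕ, g (2 * m) = (-1 : ℝ) ^ m / ((2 : ℝ) ^ m * (Nat.factorial m : ℝ)))
    (hgodd : ∀ m : ℕ, g (2 * m + 1) = 0)
    (z : ℕ → ℝ)
    (hz : ∀ n : ℕ, z n = ∑ k ∈ Finset.range (n + 1), g k * (Nat.descFactorial n k : ℝ)) :
    ∀ n : ℕ,
      z (n + 1) - z n +
        ∑ k ∈ Finset.range (n + 1), ∑ j ∈ Finset.range k,
          (-1 : ℝ) ^ (k - 1 - j) *
            ((Nat.factorial n : ℝ) /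
              ((Nat.factorial j : ℝ) * (Nat.factorial (k - 1 - j) : ℝ) *
                (Nat.factorial (n - k) : ℝ))) * z j = 0 := by
  have hcoeff : ∀ k, Δ_[1] ^[k] z 0 = k ! * g k :=
    fwdDiff_iter_eq_of_eq_sum_choose_smul fun n => by
      rw [hz]
      refine sum_congr rfl fun k _ => ?_
      rw [descFactorial_eq_factorial_mul_choose, nsmul_eq_mul]
      push_cast
      ring
  have hcoeff_one : Δ_[1] ^[1] z 0 = 0 := by
    rw [hcoeff]
    simpa using hgodd 0
  have hcoeff_rec : ∀ k, Δ_[1] ^[k + 2] z 0 = -(k + 1) * Δ_[1] ^[k] z 0 := fun k => by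
    rw [hcoeff, hcoeff]
    exact factorial_mul_gaussian_coeff_add_two hgeven hgodd k
  intro n
  have hdiff : z (n + 1) - z n = ∑ k ∈ range (n + 1), n.choose k * Δ_[1] ^[k + 1] z 0 := by
    have newton := shift_eq_sum_fwdDiff_iter 1 (Δ_[1] z) n 0
    simp only [zero_add, smul_eq_mul, mul_one, nsmul_eq_mul, ← Function.iterate_succ_apply] at newton
    exact newton
  rw [hdiff, sum_congr rfl fun k hk =>
      sum_range_alternating_mul_factorial_div z (mem_range_succ_iff.mp hk),
    sum_range_succ', sum_range_succ']
  simp only [Nat.add_sub_cancel, hcoeff_one, hcoeff_rec, cast_zero, mul_zero, zero_mul, add_zero,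
    ← sum_add_distrib]
  exact sum_eq_zero fun m _ => by push_cast; ring
end

section
/- Let m ∈ ℕ and let h_k denote the coefficient of x^k in the m-th probabilist Hermite polynomial He_m (which satisfies He_m''(x) − x·He_m'(x) + m·He_m(x) = 0), with h_k = 0 for k > m. Define z(n) = Σ_{k=0}^{n} h_k · n!/(n−k)!. Then for every n ∈ ℕ: z(n+2) − 2·z(n+1) + z(n) − Σ_{k=0}^{n} Σ_{j=0}^{k−1} (−1)^{k−1−j} · (n! / (j! · (k−1−j)! · (n−k)!)) · (z(j+1) − z(j)) + m·z(n) = 0. -/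
/-!
Write `n^(k)` for the falling factorial. In the basis `n^(k)` the forward difference acts like a
derivative, `Δ n^(k+1) = (k+1) n^(k)`, so `z = ∑ h_k n^(k)` has second difference
`∑ (k+2)(k+1) h_(k+2) n^(k)` and Newton coefficients `Δ^k z 0 = k! h_k`. The weights in the
nonlocal term are `n^(k)/(k-1)! · C(k-1, j)` with alternating signs, so its `k`-th inner sum is
`n^(k)/(k-1)! · Δ^(k-1) (Δz) 0 = k h_k n^(k)`: the nonlocal term is the lattice image of `t·y'`.
The equation then reduces, coefficient by coefficient, to the recurrence
`(k+2)(k+1) h_(k+2) = (k-m) h_k` satisfied by the coefficients of `He_m`.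
-/

open Finset Function Nat Polynomial fwdDiff

theorem Polynomial.coeff_hermite_add_two (m k : ℕ) :
    ((k : ℤ) + 2) * (k + 1) * (hermite m).coeff (k + 2) = ((k : ℤ) - m) * (hermite m).coeff k := by
  induction m generalizing k with
  | zero => cases k <;> simp [coeff_one]
  | succ m ih =>
    cases k with
    | zero =>
      rw [coeff_hermite_succ_succ, coeff_hermite_succ_zero]
      push_cast
      linear_combination -ih 1
    | succ k =>
      rw [show k + 1 + 2 = k + 2 + 1 by ring, coeff_hermite_succ_succ m (k + 2),
        coeff_hermite_succ_succ m k]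
      have h0 := ih k
      have h2 := ih (k + 2)
      push_cast at h0 h2 ⊢
      linear_combination h0 - (k + 2 : ℤ) * h2

theorem Nat.fwdDiff_descFactorial {R : Type*} [CommRing R] (k : ℕ) :
    Δ_[1] (fun n : ℕ => (n.descFactorial (k + 1) : R)) =
      fun n : ℕ => (k + 1 : R) * n.descFactorial k := by
  ext n
  simp only [fwdDiff, Nat.succ_descFactorial_succ, Nat.descFactorial_succ]
  rcases le_or_gt k n with hk | hk
  · push_cast [hk]
    ring
  · simp [Nat.descFactorial_eq_zero_iff_lt.2 hk]

section DescFactorialSeries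

variable {R : Type*} [CommRing R]

def descFactorialSeries (c : ℕ → R) (n : ℕ) : R :=
  ∑ k ∈ range (n + 1), c k * n.descFactorial k

theorem descFactorialSeries_eq_sum_range (c : ℕ → R) {n N : ℕ} (hn : n ≤ N) :
    descFactorialSeries c n = ∑ k ∈ range (N + 1), c k * n.descFactorial k := by
  refine sum_subset (range_subset_range.2 (by omega)) fun k _ hk => ?_
  rw [Nat.descFactorial_eq_zero_iff_lt.2 (by simpa using hk), Nat.cast_zero, mul_zero]

theorem fwdDiff_descFactorialSeries (c : ℕ → R) :
    Δ_[1] (descFactorialSeries c) = descFactorialSeries (fun k => (k + 1) * c (k + 1)) := by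
  ext n
  rw [fwdDiff, descFactorialSeries_eq_sum_range c n.le_succ, descFactorialSeries,
    ← sum_sub_distrib, sum_range_succ', descFactorialSeries]
  refine (add_eq_left.2 (by simp)).trans (sum_congr rfl fun k _ => ?_)
  have hΔ := congrFun (Nat.fwdDiff_descFactorial (R := R) k) n
  simp only [fwdDiff] at hΔ
  linear_combination c (k + 1) * hΔ

theorem fwdDiff_iter_descFactorialSeries_zero (c : ℕ → R) (k : ℕ) :
    Δ_[1] ^[k] (descFactorialSeries c) 0 = k ! * c k := by
  induction k generalizing c with
  | zero => simp [descFactorialSeries]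
  | succ k ih =>
    rw [iterate_succ_apply, fwdDiff_descFactorialSeries, ih]
    push_cast [Nat.factorial_succ]
    ring

end DescFactorialSeries

section Field

variable {K : Type*} [Field K] [CharZero K]

theorem factorial_div_factorial_mul_factorial_mul_factorial {n l j : ℕ} (hj : j ≤ l)
    (hl : l + 1 ≤ n) :
    (n ! : K) / (j ! * (l - j)! * (n - (l + 1))!) = l.choose j * n.descFactorial (l + 1) / l ! := by
  rw [← Nat.factorial_mul_descFactorial hl, ← Nat.choose_mul_factorial_mul_factorial hj]
  have : (l.choose j : K) ≠ 0 := Nat.cast_ne_zero.2 (Nat.choose_pos hj).ne'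
  have : ((n - (l + 1))! : K) ≠ 0 := Nat.cast_ne_zero.2 (Nat.factorial_ne_zero _)
  push_cast
  field_simp

theorem alternating_factorial_sum_eq_descFactorial_mul_fwdDiff_iter {n l : ℕ} (hl : l + 1 ≤ n)
    (f : ℕ → K) :
    ∑ j ∈ range (l + 1), (-1 : K) ^ (l - j) * (n ! / (j ! * (l - j)! * (n - (l + 1))!)) * f j
      = n.descFactorial (l + 1) / l ! * Δ_[1] ^[l] f 0 := by
  rw [fwdDiff_iter_eq_sum_shift, mul_sum]
  refine sum_congr rfl fun j hj => ?_
  rw [factorial_div_factorial_mul_factorial_mul_factorial (by simpa [Nat.lt_succ_iff] using hj) hl]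
  simp only [smul_eq_mul, mul_one, zero_add, zsmul_eq_mul]
  push_cast
  ring

theorem alternating_factorial_sum_fwdDiff_descFactorialSeries (c : ℕ → K) {n k : ℕ} (hk : k ≤ n) :
    ∑ j ∈ range k, (-1 : K) ^ (k - 1 - j) * (n ! / (j ! * (k - 1 - j)! * (n - k)!))
        * (descFactorialSeries c (j + 1) - descFactorialSeries c j)
      = k * c k * n.descFactorial k := by
  cases k with
  | zero => simp
  | succ l =>
    rw [Nat.add_sub_cancel]
    refine (alternating_factorial_sum_eq_descFactorial_mul_fwdDiff_iter hk
      (Δ_[1] (descFactorialSeries c))).trans ?_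
    rw [← iterate_succ_apply, fwdDiff_iter_descFactorialSeries_zero, Nat.factorial_succ]
    have : (l ! : K) ≠ 0 := Nat.cast_ne_zero.2 (Nat.factorial_ne_zero l)
    push_cast
    field_simp

end Field

/-- The discrete Hermite equation: the lattice polynomial built from the coefficients of
the m-th probabilist Hermite polynomial is an exact solution of the nonlocal recurrence
representing y'' − t·y' + m·y = 0 on the integer lattice. -/
theorem discrete_hermite_equation (m : ℕ) (h : ℕ → ℝ)
    (hh : ∀ k : ℕ, h k = ((Polynomial.hermite m).coeff k : ℝ))
    (z : ℕ → ℝ)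
    (hz : ∀ n : ℕ, z n = ∑ k ∈ Finset.range (n + 1), h k * (Nat.descFactorial n k : ℝ)) :
    ∀ n : ℕ,
      z (n + 2) - 2 * z (n + 1) + z n -
        (∑ k ∈ Finset.range (n + 1), ∑ j ∈ Finset.range k,
          (-1 : ℝ) ^ (k - 1 - j) *
            ((Nat.factorial n : ℝ) /
              ((Nat.factorial j : ℝ) * (Nat.factorial (k - 1 - j) : ℝ) *
                (Nat.factorial (n - k) : ℝ))) * (z (j + 1) - z j))
        + (m : ℝ) * z n = 0 := by
  intro n
  obtain rfl : z = descFactorialSeries h := funext hz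
  have hΔ2 : descFactorialSeries h (n + 2) - 2 * descFactorialSeries h (n + 1)
      + descFactorialSeries h n = Δ_[1] (Δ_[1] (descFactorialSeries h)) n := by
    simp only [fwdDiff]
    ring
  rw [hΔ2, fwdDiff_descFactorialSeries, fwdDiff_descFactorialSeries,
    sum_congr rfl fun k hk => alternating_factorial_sum_fwdDiff_descFactorialSeries h
      (Nat.lt_succ_iff.1 (mem_range.1 hk))]
  simp only [descFactorialSeries, mul_sum, ← sum_sub_distrib, ← sum_add_distrib]
  refine sum_eq_zero fun k _ => ?_
  have hrec : ((k : ℝ) + 2) * (k + 1) * h (k + 2) = ((k : ℝ) - m) * h k := by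
    rw [hh, hh]
    exact_mod_cast coeff_hermite_add_two m k
  push_cast
  linear_combination (n.descFactorial k : ℝ) * hrec
end
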